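/- Achieving heterogeneous differential privacy via the stretching mechanism: let f : D → ℝ have finite global sensitivity S(f) > 0, let v ∈ [0,1]ⁿ be a privacy vector and T(v) a shrinkage matrix with S_i(R(f,v)) ≤ vᵢ·S(f) for all i, where R(f,v)(d) = f(T(v)·d). Then the mechanism f̂(d) = R(f,v)(d) + N, with N Laplace-distributed with scale σ = S(f)/ε, satisfies (ε, v)-differential privacy: for all i, all neighboring d ∼ d⁽ⁱ⁾, and all t ∈ ℝ, the probability density satisfies p_{f̂(d)}(t) ≤ exp(ε·vᵢ)·p_{f̂(d⁽ⁱ⁾)}(t). -/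

import Mathlib

def NeighborAt {n : ℕ} (i : Fin n) (d d' : Fin n → ℝ) : Prop :=
  ∀ j, j ≠ i → d j = d' j

def Neighbor {n : ℕ} (d d' : Fin n → ℝ) : Prop :=
  ∃ i, NeighborAt i d d'

def stretch {n : ℕ} (w : Fin n → ℝ) (x : Fin n → ℝ) : Fin n → ℝ :=
  fun i => w i * x i

def SemiBalanced {n : ℕ} (D : Set (Fin n → ℝ)) : Prop :=
  ∀ w : Fin n → ℝ, (∀ i, w i ∈ Set.Icc (0:ℝ) 1) → ∀ x ∈ D, stretch w x ∈ D

/-- Global sensitivity of `f` over `D`. -/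
noncomputable def globSens {n : ℕ} (f : (Fin n → ℝ) → ℝ) (D : Set (Fin n → ℝ)) : ℝ :=
  sSup {r | ∃ d ∈ D, ∃ d' ∈ D, Neighbor d d' ∧ r = |f d - f d'|}

/-- Modular global sensitivity in coordinate `i` of `g` over `D`. -/
noncomputable def modSens {n : ℕ} (g : (Fin n → ℝ) → ℝ) (D : Set (Fin n → ℝ)) (i : Fin n) : ℝ :=
  sSup {r | ∃ d ∈ D, ∃ d' ∈ D, NeighborAt i d d' ∧ r = |g d - g d'|}

/-- Density of the centered Laplace distribution with scale `σ`. -/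
noncomputable def lapDensity (σ x : ℝ) : ℝ :=
  (1 / (2 * σ)) * Real.exp (-|x| / σ)

/-!
Stretching by `Tv ∈ [0,1]ⁿ` keeps `D` inside itself and maps `i`-neighbours to `i`-neighbours, so
the sensitivity set of `f ∘ stretch Tv` in coordinate `i` is dominated by `S(f)`; in particular it
is bounded, and a change of `d` in coordinate `i` moves the mean `f (stretch Tv d)` of the output by
at most `vᵢ S(f)`. Shifting the mean of a Laplace density of scale `σ` by `Δ` changes it by a factor
at most `exp (Δ / σ)`, which for `σ = S(f) / ε` is at most `exp (ε vᵢ)`.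
-/

lemma lapDensity_nonneg {σ : ℝ} (hσ : 0 ≤ σ) (x : ℝ) : 0 ≤ lapDensity σ x := by
  unfold lapDensity
  positivity

lemma lapDensity_le_exp_mul_lapDensity {σ : ℝ} (hσ : 0 ≤ σ) (x y : ℝ) :
    lapDensity σ x ≤ Real.exp (|x - y| / σ) * lapDensity σ y := by
  unfold lapDensity
  rw [mul_left_comm, ← Real.exp_add]
  gcongr
  rw [← add_div]
  gcongr
  linarith [abs_sub_abs_le_abs_sub y x, abs_sub_comm x y]

lemma NeighborAt.stretch {n : ℕ} {i : Fin n} {d d' : Fin n → ℝ} (h : NeighborAt i d d')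
    (w : Fin n → ℝ) : NeighborAt i (stretch w d) (stretch w d') := fun j hj => by
  simp only [_root_.stretch, h j hj]

lemma abs_sub_le_globSens {n : ℕ} {f : (Fin n → ℝ) → ℝ} {D : Set (Fin n → ℝ)}
    (hf : 0 < globSens f D) {d d' : Fin n → ℝ} (hd : d ∈ D) (hd' : d' ∈ D)
    (hnb : Neighbor d d') : |f d - f d'| ≤ globSens f D := by
  -- an unbounded sensitivity set has junk supremum `0`
  have hbdd : BddAbove {r | ∃ d ∈ D, ∃ d' ∈ D, Neighbor d d' ∧ r = |f d - f d'|} := by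
    by_contra h
    rw [globSens, Real.sSup_of_not_bddAbove h] at hf
    exact lt_irrefl 0 hf
  exact le_csSup hbdd ⟨d, hd, d', hd', hnb, rfl⟩

lemma abs_sub_le_modSens_of_forall_le {n : ℕ} {g : (Fin n → ℝ) → ℝ} {D : Set (Fin n → ℝ)}
    {i : Fin n} {C : ℝ} (hC : ∀ a ∈ D, ∀ b ∈ D, NeighborAt i a b → |g a - g b| ≤ C)
    {d d' : Fin n → ℝ} (hd : d ∈ D) (hd' : d' ∈ D) (hnb : NeighborAt i d d') :
    |g d - g d'| ≤ modSens g D i :=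
  le_csSup ⟨C, by rintro _ ⟨a, ha, b, hb, hab, rfl⟩; exact hC a ha b hb hab⟩
    ⟨d, hd, d', hd', hnb, rfl⟩

lemma abs_sub_stretch_le_modSens {n : ℕ} {f : (Fin n → ℝ) → ℝ} {D : Set (Fin n → ℝ)}
    (hD : SemiBalanced D) (hf : 0 < globSens f D) {w : Fin n → ℝ}
    (hw : ∀ i, w i ∈ Set.Icc (0:ℝ) 1) {i : Fin n} {d d' : Fin n → ℝ} (hd : d ∈ D) (hd' : d' ∈ D)
    (hnb : NeighborAt i d d') :
    |f (stretch w d) - f (stretch w d')| ≤ modSens (fun d => f (stretch w d)) D i :=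
  abs_sub_le_modSens_of_forall_le
    (fun _ ha _ hb hab => abs_sub_le_globSens hf (hD w hw _ ha) (hD w hw _ hb) ⟨i, hab.stretch w⟩)
    hd hd' hnb

theorem stretching_mechanism_HDP_general {n : ℕ} (f : (Fin n → ℝ) → ℝ) (D : Set (Fin n → ℝ))
    (hD : SemiBalanced D) (ε : ℝ) (hε : 0 < ε)
    (hSf : 0 < globSens f D)
    (v Tv : Fin n → ℝ)
    (hTv : ∀ i, Tv i ∈ Set.Icc (0:ℝ) 1)
    (hSi : ∀ i, modSens (fun d => f (stretch Tv d)) D i ≤ v i * globSens f D) :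
    ∀ i : Fin n, ∀ d ∈ D, ∀ d' ∈ D, NeighborAt i d d' → ∀ t : ℝ,
      lapDensity (globSens f D / ε) (t - f (stretch Tv d))
        ≤ Real.exp (ε * v i) * lapDensity (globSens f D / ε) (t - f (stretch Tv d')) := by
  intro i d hd d' hd' hnb t
  set S := globSens f D
  have hσ : 0 < S / ε := div_pos hSf hε
  have hshift : |f (stretch Tv d) - f (stretch Tv d')| ≤ v i * S :=
    (abs_sub_stretch_le_modSens hD hSf hTv hd hd' hnb).trans (hSi i)
  have hratio : |f (stretch Tv d) - f (stretch Tv d')| / (S / ε) ≤ ε * v i :=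
    calc _ ≤ v i * S / (S / ε) := div_le_div_of_nonneg_right hshift hσ.le
      _ = ε * v i := by field_simp
  calc _ ≤ Real.exp (|(t - f (stretch Tv d)) - (t - f (stretch Tv d'))| / (S / ε))
          * lapDensity (S / ε) (t - f (stretch Tv d')) :=
        lapDensity_le_exp_mul_lapDensity hσ.le _ _
    _ ≤ _ := by
      rw [sub_sub_sub_cancel_left, abs_sub_comm]
      exact mul_le_mul_of_nonneg_right (Real.exp_le_exp.2 hratio) (lapDensity_nonneg hσ.le _)

/-- Achieving heterogeneous differential privacy via the stretching mechanism. -/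
theorem stretching_mechanism_HDP {n : ℕ} (f : (Fin n → ℝ) → ℝ) (D : Set (Fin n → ℝ))
    (hD : SemiBalanced D) (ε : ℝ) (hε : 0 < ε)
    (hSf : 0 < globSens f D)
    (v Tv : Fin n → ℝ) (hv : ∀ i, v i ∈ Set.Icc (0:ℝ) 1)
    (hTv : ∀ i, Tv i ∈ Set.Icc (0:ℝ) 1)
    (hSi : ∀ i, modSens (fun d => f (stretch Tv d)) D i ≤ v i * globSens f D) :
    ∀ i : Fin n, ∀ d ∈ D, ∀ d' ∈ D, NeighborAt i d d' → ∀ t : ℝ,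
      lapDensity (globSens f D / ε) (t - f (stretch Tv d))
        ≤ Real.exp (ε * v i) * lapDensity (globSens f D / ε) (t - f (stretch Tv d')) :=
  stretching_mechanism_HDP_general f D hD ε hε hSf v Tv hTv hSi
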